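/- arXiv:1409.2340 — 3 statements merged into one kernel-verified Lean document; each statement's English description precedes it below -/
import Mathlib

section
/- Let c₀>0, α∈[0,1] and β=√(1−α²). Let m,n,b:ℝ→ℝ³ be a solution of the self-similar profile system. Define M(s,t)=m(s/√t) for s∈ℝ, t>0. Then for every t>0 and every s∈ℝ, the time derivative ∂ₜM(s,t) of t'↦M(s,t') equals β·(M(s,t) × ∂ₛₛM(s,t)) − α·(M(s,t) × (M(s,t) × ∂ₛₛM(s,t))), where × denotes the cross product in ℝ³ and ∂ₛₛM(s,t) is the second derivative of s'↦M(s',t) at s; i.e., M is a solution of the one-dimensional Landau–Lifshitz–Gilbert equation for t>0. -/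
open Real Filter

/-- The Serret–Frenet system with curvature `c` and torsion `τ` for
functions `m n b : ℝ → ℝ³`. -/
def SerretFrenet (c τ : ℝ → ℝ) (m n b : ℝ → Fin 3 → ℝ) : Prop :=
  ∀ s : ℝ,
    HasDerivAt m (c s • n s) s ∧
    HasDerivAt n ((-c s) • m s + τ s • b s) s ∧
    HasDerivAt b ((-τ s) • n s) s

/-- The self-similar profile system: Serret–Frenet with curvature
`c₀ e^{-αs²/4}`, torsion `βs/2` where `β = √(1-α²)`, and the canonical
initial conditions. -/
def ProfileSystem (c₀ α : ℝ) (m n b : ℝ → Fin 3 → ℝ) : Prop :=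
  SerretFrenet (fun s => c₀ * Real.exp (-α * s ^ 2 / 4))
    (fun s => Real.sqrt (1 - α ^ 2) * s / 2) m n b ∧
  m 0 = ![1, 0, 0] ∧ n 0 = ![0, 1, 0] ∧ b 0 = ![0, 0, 1]

/-!
The Frenet frame `(m, n, b)` stays right-handed: the defects `m × n - b`, `m × b + n` and
`n × b - m` satisfy a linear system with skew-symmetric coefficients, so the sum of their squared
lengths is constant, hence zero. With `σ = s / √t` the chain rule gives
`∂ₜM = -σ c(σ) n(σ) / (2t)` and `∂ₛₛM = t⁻¹ (-c² m + c' n + c τ b)(σ)`, and the frame relations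
turn `β M × ∂ₛₛM - α M × (M × ∂ₛₛM)` into `t⁻¹ ((α c' - β c τ) n + (β c' + α c τ) b)(σ)`.
Since `c' = -α σ c / 2`, `τ = β σ / 2` and `α² + β² = 1`, this is `∂ₜM`.
-/

open Matrix

theorem hasDerivAt_div_const (x r : ℝ) : HasDerivAt (fun y => y / r) r⁻¹ x := by
  simpa using (hasDerivAt_id x).div_const r

theorem hasDerivAt_div_sqrt (s : ℝ) {t : ℝ} (ht : 0 < t) :
    HasDerivAt (fun t => s / √t) (-(s / √t) / (2 * t)) t := by
  refine ((hasDerivAt_const t s).div (hasDerivAt_sqrt ht.ne') (sqrt_pos.2 ht).ne').congr_deriv ?_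
  field_simp
  rw [sq_sqrt ht.le]
  ring

theorem hasDerivAt_const_mul_exp_neg_mul_sq_div_four (c₀ α s : ℝ) :
    HasDerivAt (fun s => c₀ * exp (-α * s ^ 2 / 4))
      (-(α * s / 2) * (c₀ * exp (-α * s ^ 2 / 4))) s := by
  refine ((((hasDerivAt_pow 2 s).const_mul (-α)).div_const 4).exp.const_mul c₀).congr_deriv ?_
  push_cast
  ring

theorem HasDerivAt.crossProduct {f g : ℝ → Fin 3 → ℝ} {f' g' : Fin 3 → ℝ} {x : ℝ}
    (hf : HasDerivAt f f' x) (hg : HasDerivAt g g' x) :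
    HasDerivAt (fun y => f y ⨯₃ g y) (f' ⨯₃ g x + f x ⨯₃ g') x := by
  simpa [add_comm] using
    (_root_.crossProduct (R := ℝ)).toContinuousBilinearMap.hasDerivAt_of_bilinear
      (fun _ => hf) (fun _ => hg)

theorem HasDerivAt.dotProduct {ι : Type*} [Fintype ι] {f g : ℝ → ι → ℝ} {f' g' : ι → ℝ}
    {x : ℝ} (hf : HasDerivAt f f' x) (hg : HasDerivAt g g' x) :
    HasDerivAt (fun y => f y ⬝ᵥ g y) (f' ⬝ᵥ g x + f x ⬝ᵥ g') x := by
  simpa [add_comm] using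
    (dotProductBilin ℝ ℝ (m := ι) (A := ℝ)).toContinuousBilinearMap.hasDerivAt_of_bilinear
      (fun _ => hf) (fun _ => hg)

/-- The energy `u ⬝ᵥ u + v ⬝ᵥ v + w ⬝ᵥ w` of this skew-symmetric system is conserved. -/
theorem eq_zero_of_hasDerivAt_skew {ι : Type*} [Fintype ι] {u v w : ℝ → ι → ℝ}
    {c τ : ℝ → ℝ} (hu : ∀ s, HasDerivAt u (τ s • v s) s)
    (hv : ∀ s, HasDerivAt v (c s • w s - τ s • u s) s)
    (hw : ∀ s, HasDerivAt w (-c s • v s) s)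
    {s₀ : ℝ} (h₀ : u s₀ = 0 ∧ v s₀ = 0 ∧ w s₀ = 0) (s : ℝ) :
    u s = 0 ∧ v s = 0 ∧ w s = 0 := by
  set E : ℝ → ℝ := fun s => u s ⬝ᵥ u s + v s ⬝ᵥ v s + w s ⬝ᵥ w s
  have hE s : HasDerivAt E 0 s := by
    refine ((((hu s).dotProduct (hu s)).add ((hv s).dotProduct (hv s))).add
      ((hw s).dotProduct (hw s))).congr_deriv ?_
    simp only [smul_dotProduct, dotProduct_smul, sub_dotProduct, dotProduct_sub, smul_eq_mul]
    ring
  have hEs : E s = 0 := by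
    rw [is_const_of_deriv_eq_zero (fun s => (hE s).differentiableAt) (fun s => (hE s).deriv) s s₀]
    simp [E, h₀.1, h₀.2.1, h₀.2.2]
  have hsq (x : ι → ℝ) : 0 ≤ x ⬝ᵥ x := Fintype.sum_nonneg fun i => mul_self_nonneg (x i)
  obtain ⟨hu0, hv0, hw0⟩ : u s ⬝ᵥ u s = 0 ∧ v s ⬝ᵥ v s = 0 ∧ w s ⬝ᵥ w s = 0 := by
    refine ⟨?_, ?_, ?_⟩ <;> linarith [hsq (u s), hsq (v s), hsq (w s)]
  exact ⟨dotProduct_self_eq_zero.1 hu0, dotProduct_self_eq_zero.1 hv0,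
    dotProduct_self_eq_zero.1 hw0⟩

def IsRightHandedFrame (m n b : Fin 3 → ℝ) : Prop :=
  m ⨯₃ n = b ∧ m ⨯₃ b = -n ∧ n ⨯₃ b = m

theorem IsRightHandedFrame.smul_cross_sub_smul_cross_cross {m n b : Fin 3 → ℝ}
    (hf : IsRightHandedFrame m n b) (α β p q r : ℝ) :
    β • m ⨯₃ (p • m + q • n + r • b) - α • m ⨯₃ (m ⨯₃ (p • m + q • n + r • b)) =
      (α * q - β * r) • n + (β * q + α * r) • b := by
  obtain ⟨hmn, hmb, -⟩ := hf
  simp only [map_add, map_smul, map_neg, cross_self, smul_zero, zero_add, hmn, hmb]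
  module

namespace SerretFrenet

variable {c τ : ℝ → ℝ} {m n b : ℝ → Fin 3 → ℝ}

theorem isRightHandedFrame (h : SerretFrenet c τ m n b) {s₀ : ℝ}
    (h₀ : IsRightHandedFrame (m s₀) (n s₀) (b s₀)) (s : ℝ) :
    IsRightHandedFrame (m s) (n s) (b s) := by
  have hm s := (h s).1
  have hn s := (h s).2.1
  have hb s := (h s).2.2
  have hu s : HasDerivAt (fun s => m s ⨯₃ n s - b s) (τ s • (m s ⨯₃ b s + n s)) s :=
    (((hm s).crossProduct (hn s)).sub (hb s)).congr_deriv (by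
      simp only [map_add, map_smul, LinearMap.smul_apply, cross_self]; module)
  have hv s : HasDerivAt (fun s => m s ⨯₃ b s + n s)
      (c s • (n s ⨯₃ b s - m s) - τ s • (m s ⨯₃ n s - b s)) s :=
    (((hm s).crossProduct (hb s)).add (hn s)).congr_deriv (by
      simp only [map_smul, LinearMap.smul_apply]; module)
  have hw s : HasDerivAt (fun s => n s ⨯₃ b s - m s) (-c s • (m s ⨯₃ b s + n s)) s :=
    (((hn s).crossProduct (hb s)).sub (hm s)).congr_deriv (by
      simp only [map_add, map_smul, LinearMap.add_apply, LinearMap.smul_apply, cross_self]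
      module)
  obtain ⟨h₀₁, h₀₂, h₀₃⟩ := h₀
  obtain ⟨hu₀, hv₀, hw₀⟩ := eq_zero_of_hasDerivAt_skew hu hv hw
    (s₀ := s₀) (by simp [h₀₁, h₀₂, h₀₃]) s
  exact ⟨sub_eq_zero.1 hu₀, eq_neg_of_add_eq_zero_left hv₀, sub_eq_zero.1 hw₀⟩

theorem hasDerivAt_comp_div (h : SerretFrenet c τ m n b) (r x : ℝ) :
    HasDerivAt (fun y => m (y / r)) (r⁻¹ • c (x / r) • n (x / r)) x :=
  (h (x / r)).1.scomp x (hasDerivAt_div_const x r)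

theorem deriv_deriv_comp_div (h : SerretFrenet c τ m n b) {r s c' : ℝ}
    (hc : HasDerivAt c c' (s / r)) :
    deriv (deriv fun x => m (x / r)) s =
      (-c (s / r) ^ 2 / r ^ 2) • m (s / r) + (c' / r ^ 2) • n (s / r) +
        (c (s / r) * τ (s / r) / r ^ 2) • b (s / r) := by
  have hdiv := hasDerivAt_div_const s r
  rw [funext fun x => (h.hasDerivAt_comp_div r x).deriv]
  refine (((hc.comp s hdiv).smul ((h (s / r)).2.1.scomp s hdiv)).const_smul r⁻¹).deriv.trans ?_
  simp only [Function.comp_apply]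
  match_scalars <;> ring

end SerretFrenet

theorem llg_self_similar_solution_general (c₀ α : ℝ)
    (hα : α ∈ Set.Icc (0 : ℝ) 1)
    (m n b : ℝ → Fin 3 → ℝ) (h : ProfileSystem c₀ α m n b)
    (M : ℝ → ℝ → Fin 3 → ℝ) (hM : ∀ s t : ℝ, M s t = m (s / Real.sqrt t)) :
    ∀ t : ℝ, 0 < t → ∀ s : ℝ,
      HasDerivAt (fun t' : ℝ => M s t')
        (Real.sqrt (1 - α ^ 2) •
            crossProduct (M s t) (deriv (deriv (fun s' : ℝ => M s' t)) s)
          - α • crossProduct (M s t)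
              (crossProduct (M s t)
                (deriv (deriv (fun s' : ℝ => M s' t)) s))) t := by
  obtain ⟨hSF, hm₀, hn₀, hb₀⟩ := h
  have hframe := hSF.isRightHandedFrame (s₀ := 0) (by
    rw [hm₀, hn₀, hb₀]
    refine ⟨?_, ?_, ?_⟩ <;> ext i <;> fin_cases i <;> simp [cross_apply])
  have hβ : √(1 - α ^ 2) ^ 2 = 1 - α ^ 2 := sq_sqrt (by nlinarith [hα.1, hα.2])
  intro t ht s
  set σ := s / √t
  rw [funext fun s' => hM s' t, funext fun t' => hM s t',
    hSF.deriv_deriv_comp_div (hasDerivAt_const_mul_exp_neg_mul_sq_div_four c₀ α σ),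
    (hframe σ).smul_cross_sub_smul_cross_cross, sq_sqrt ht.le]
  refine ((hSF σ).1.scomp t (hasDerivAt_div_sqrt s ht)).congr_deriv ?_
  match_scalars
  · linear_combination s / √t * (c₀ * exp (-α * σ ^ 2 / 4)) / (2 * t) * hβ
  · ring

/-- If `m,n,b` solve the self-similar profile system, then
`M(s,t) := m(s/√t)` solves the one-dimensional Landau–Lifshitz–Gilbert equation
`∂ₜM = β (M × ∂ₛₛM) − α (M × (M × ∂ₛₛM))` for `t > 0`. -/
theorem llg_self_similar_solution (c₀ α : ℝ) (hc₀ : 0 < c₀)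
    (hα : α ∈ Set.Icc (0 : ℝ) 1)
    (m n b : ℝ → Fin 3 → ℝ) (h : ProfileSystem c₀ α m n b)
    (M : ℝ → ℝ → Fin 3 → ℝ) (hM : ∀ s t : ℝ, M s t = m (s / Real.sqrt t)) :
    ∀ t : ℝ, 0 < t → ∀ s : ℝ,
      HasDerivAt (fun t' : ℝ => M s t')
        (Real.sqrt (1 - α ^ 2) •
            crossProduct (M s t) (deriv (deriv (fun s' : ℝ => M s' t)) s)
          - α • crossProduct (M s t)
              (crossProduct (M s t)
                (deriv (deriv (fun s' : ℝ => M s' t)) s))) t :=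
  llg_self_similar_solution_general c₀ α hα m n b h M hM
end

section
/- Let c₀>0, α∈[0,1] and β=√(1−α²). Let m,n,b:ℝ→ℝ³ be a solution of the self-similar profile system. Then there exists a unit vector A⁺=(A₁⁺,A₂⁺,A₃⁺)∈ℝ³ (|A⁺|=1) such that m(s)→A⁺ as s→+∞ and m(s)→A⁻:=(A₁⁺,−A₂⁺,−A₃⁺) as s→−∞. Consequently, setting M(s,t)=m(s/√t) for t>0, for every fixed s>0 one has M(s,t)→A⁺ as t→0⁺, and for every fixed s<0 one has M(s,t)→A⁻ as t→0⁺. -/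
open Real Filter

/-!
The frame `F(s)` with rows `m, n, b` satisfies `F' = K F` with `K` skew-symmetric, so `Fᵀ F` is
conserved: `F` stays orthogonal (`|m| = 1`, `|n|, |b| ≤ 1`), and a solution with zero initial
frame vanishes, which gives uniqueness. For `α > 0` the curvature is a Gaussian, so `m' = c n` is
integrable at `+∞`; for `α = 0` the torsion is linear and an integration by parts gives the same
conclusion. Since `c` is even and `τ` odd, `(R m(-s), -R n(-s), -R b(-s))` with
`R = diag(1, -1, -1)` solves the same initial value problem, so `m(-s) = R m(s)` and the limit at
`-∞` is `R A⁺`. Finally `s / √t → ±∞` as `t → 0⁺`.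
-/

open Set MeasureTheory Topology Matrix

theorem tendsto_inv_sqrt_nhdsGT_zero : Tendsto (fun t => (√t)⁻¹) (𝓝[>] 0) atTop := by
  refine tendsto_inv_nhdsGT_zero.comp (tendsto_nhdsWithin_iff.2 ⟨?_, ?_⟩)
  · exact (continuous_sqrt.tendsto' 0 0 sqrt_zero).mono_left nhdsWithin_le_nhds
  · exact eventually_nhdsWithin_of_forall fun t ht => sqrt_pos.2 ht

theorem Matrix.dotProduct_self_eq_one_of_mem_orthogonalGroup {ι : Type*} [Fintype ι]
    [DecidableEq ι] {Q : Matrix ι ι ℝ} (hQ : Q ∈ orthogonalGroup ι ℝ) (i : ι) :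
    Q i ⬝ᵥ Q i = 1 := by
  simpa [mul_apply, dotProduct] using congrFun₂ ((mem_orthogonalGroup_iff ι ℝ).1 hQ) i i

theorem norm_le_one_of_dotProduct_self_eq_one {ι : Type*} [Fintype ι] {v : ι → ℝ}
    (hv : v ⬝ᵥ v = 1) : ‖v‖ ≤ 1 := by
  refine (pi_norm_le_iff_of_nonneg zero_le_one).2 fun j => ?_
  rw [Real.norm_eq_abs, abs_le_one_iff_mul_self_le_one, ← hv]
  exact Finset.single_le_sum (fun k _ => mul_self_nonneg (v k)) (Finset.mem_univ j)

def frameMatrix (m n b : ℝ → Fin 3 → ℝ) (s : ℝ) : Matrix (Fin 3) (Fin 3) ℝ :=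
  Matrix.of ![m s, n s, b s]

theorem frameMatrix_eq_one {m n b : ℝ → Fin 3 → ℝ} {s : ℝ} (hm : m s = ![1, 0, 0])
    (hn : n s = ![0, 1, 0]) (hb : b s = ![0, 0, 1]) : frameMatrix m n b s = 1 := by
  ext i j
  fin_cases i <;> fin_cases j <;> simp [frameMatrix, hm, hn, hb]

namespace SerretFrenet

variable {c τ : ℝ → ℝ} {m n b m' n' b' : ℝ → Fin 3 → ℝ}

theorem sub (h : SerretFrenet c τ m n b) (h' : SerretFrenet c τ m' n' b') :
    SerretFrenet c τ (m - m') (n - n') (b - b') := by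
  intro s
  obtain ⟨hm, hn, hb⟩ := h s
  obtain ⟨hm', hn', hb'⟩ := h' s
  refine ⟨(hm.sub hm').congr_deriv ?_, (hn.sub hn').congr_deriv ?_,
    (hb.sub hb').congr_deriv ?_⟩
  all_goals simp only [Pi.sub_apply, smul_sub, add_sub_add_comm]

theorem const_mul (d : Fin 3 → ℝ) (h : SerretFrenet c τ m n b) :
    SerretFrenet c τ (fun s => d * m s) (fun s => d * n s) (fun s => d * b s) := by
  intro s
  obtain ⟨hm, hn, hb⟩ := h s
  refine ⟨(hm.const_mul d).congr_deriv ?_, (hn.const_mul d).congr_deriv ?_,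
    (hb.const_mul d).congr_deriv ?_⟩ <;> simp only [mul_add, mul_smul_comm]

theorem comp_neg (hc : ∀ s, c (-s) = c s) (hτ : ∀ s, τ (-s) = -τ s)
    (h : SerretFrenet c τ m n b) :
    SerretFrenet c τ (fun s => m (-s)) (fun s => -n (-s)) (fun s => -b (-s)) := by
  intro s
  obtain ⟨hm, hn, hb⟩ := h (-s)
  refine ⟨(hm.scomp s (hasDerivAt_neg s)).congr_deriv ?_,
    (hn.scomp s (hasDerivAt_neg s)).neg.congr_deriv ?_,
    (hb.scomp s (hasDerivAt_neg s)).neg.congr_deriv ?_⟩ <;>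
    simp only [hc, hτ, neg_smul, one_smul, smul_neg, neg_neg, neg_add]

theorem transpose_frameMatrix_mul_self (h : SerretFrenet c τ m n b) (s : ℝ) :
    (frameMatrix m n b s)ᵀ * frameMatrix m n b s =
      (frameMatrix m n b 0)ᵀ * frameMatrix m n b 0 := by
  ext i j
  simp only [mul_apply, Fin.sum_univ_three, transpose_apply, frameMatrix, of_apply,
    Matrix.cons_val_zero, Matrix.cons_val_one, Matrix.cons_val_two]
  have hconst (t : ℝ) :
      HasDerivAt (fun t => m t i * m t j + n t i * n t j + b t i * b t j) 0 t := by
    obtain ⟨hm, hn, hb⟩ := h t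
    refine ((((hasDerivAt_pi.1 hm i).mul (hasDerivAt_pi.1 hm j)).add
      ((hasDerivAt_pi.1 hn i).mul (hasDerivAt_pi.1 hn j))).add
      ((hasDerivAt_pi.1 hb i).mul (hasDerivAt_pi.1 hb j))).congr_deriv ?_
    simp only [Pi.add_apply, Pi.smul_apply, smul_eq_mul]
    ring
  exact is_const_of_deriv_eq_zero (fun t => (hconst t).differentiableAt)
    (fun t => (hconst t).deriv) s 0

theorem frameMatrix_mem_orthogonalGroup (h : SerretFrenet c τ m n b)
    (h0 : frameMatrix m n b 0 = 1) (s : ℝ) :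
    frameMatrix m n b s ∈ orthogonalGroup (Fin 3) ℝ := by
  rw [mem_orthogonalGroup_iff', h.transpose_frameMatrix_mul_self s, h0, transpose_one, one_mul]

theorem eq_of_frameMatrix_zero_eq (h : SerretFrenet c τ m n b)
    (h' : SerretFrenet c τ m' n' b') (h0 : frameMatrix m n b 0 = frameMatrix m' n' b' 0) :
    m = m' := by
  funext s
  have hdiff := (h.sub h').transpose_frameMatrix_mul_self s
  have hdiff0 : frameMatrix (m - m') (n - n') (b - b') 0 = 0 := by
    ext i j
    have := congrFun₂ h0 i j
    fin_cases i <;> simpa [frameMatrix, sub_eq_zero] using this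
  rw [hdiff0, transpose_zero, zero_mul, ← conjTranspose_eq_transpose_of_trivial,
    conjTranspose_mul_self_eq_zero] at hdiff
  ext k
  simpa [frameMatrix, sub_eq_zero] using congrFun₂ hdiff 0 k

theorem apply_neg (hc : ∀ s, c (-s) = c s) (hτ : ∀ s, τ (-s) = -τ s)
    (h : SerretFrenet c τ m n b) (hm0 : m 0 = ![1, 0, 0]) (hn0 : n 0 = ![0, 1, 0])
    (hb0 : b 0 = ![0, 0, 1]) (s : ℝ) : m (-s) = ![1, -1, -1] * m s := by
  have hreflect := (h.comp_neg hc hτ).const_mul ![1, -1, -1]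
  have h0 : frameMatrix m n b 0 =
      frameMatrix (fun s => ![1, -1, -1] * m (-s)) (fun s => ![1, -1, -1] * -n (-s))
        (fun s => ![1, -1, -1] * -b (-s)) 0 := by
    ext i j
    fin_cases i <;> fin_cases j <;> simp [frameMatrix, hm0, hn0, hb0]
  simpa using congrFun (h.eq_of_frameMatrix_zero_eq hreflect h0) (-s)

theorem exists_tendsto_atTop_of_integrableOn {a B : ℝ} (h : SerretFrenet c τ m n b)
    (hc : IntegrableOn c (Ioi a)) (hn : ∀ s, ‖n s‖ ≤ B) :
    ∃ A, Tendsto m atTop (𝓝 A) := by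
  have hderiv : (fun s => c s • n s) = deriv m := funext fun s => (h s).1.deriv.symm
  refine ⟨_, tendsto_limUnder_of_hasDerivAt_of_integrableOn_Ioi (a := a)
    (fun s _ => (h s).1) ?_⟩
  refine (hc.norm.mul_const B).mono' (hderiv ▸ (measurable_deriv m).aestronglyMeasurable)
    (Eventually.of_forall fun s => ?_)
  exact (norm_smul_le _ _).trans (mul_le_mul_of_nonneg_left (hn s) (norm_nonneg _))

/-- Since `b' = -l s n`, the curvature term `κ n` equals `-(κ / (l s)) b'`; integrating by parts,
`m + (κ / (l s)) b` has derivative `-(κ / (l s²)) b`, which is integrable at infinity. -/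
theorem exists_tendsto_atTop_of_linear_torsion {κ l B : ℝ} (hl : l ≠ 0)
    (h : SerretFrenet (fun _ => κ) (fun s => l * s) m n b) (hb : ∀ s, ‖b s‖ ≤ B) :
    ∃ A, Tendsto m atTop (𝓝 A) := by
  have hbc : Continuous b := continuous_iff_continuousAt.2 fun s => (h s).2.2.continuousAt
  have hderiv : ∀ s ∈ Ioi (1 : ℝ), HasDerivAt (fun s => m s + (κ / l * s⁻¹) • b s)
      ((-(κ / l) * (s ^ 2)⁻¹) • b s) s := by
    intro s hs
    have hs0 : s ≠ 0 := (zero_lt_one.trans hs).ne'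
    obtain ⟨hm, -, hb'⟩ := h s
    refine (hm.add (((hasDerivAt_inv hs0).const_mul (κ / l)).smul hb')).congr_deriv ?_
    have hcoef : κ / l * s⁻¹ * -(l * s) = -κ := by field_simp
    beta_reduce
    rw [smul_smul, hcoef, mul_neg, neg_mul, neg_smul, neg_smul]
    abel
  have hint : IntegrableOn (fun s => (-(κ / l) * (s ^ 2)⁻¹) • b s) (Ioi 1) := by
    have hsq : IntegrableOn (fun s : ℝ => (s ^ 2)⁻¹) (Ioi 1) :=
      (integrableOn_Ioi_rpow_of_lt (by norm_num : (-2 : ℝ) < -1) one_pos).congr_fun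
        (fun s hs => by dsimp only; rw [rpow_neg (zero_lt_one.trans hs).le, rpow_two])
        measurableSet_Ioi
    have hmeas : Measurable fun s : ℝ => (-(κ / l) * (s ^ 2)⁻¹) • b s :=
      (measurable_const.mul (measurable_id.pow_const 2).inv).smul hbc.measurable
    refine ((hsq.const_mul |κ / l|).mul_const B).mono' hmeas.aestronglyMeasurable
      (Eventually.of_forall fun s => ?_)
    rw [norm_smul, Real.norm_eq_abs, abs_mul, abs_neg, abs_inv, abs_pow, sq_abs]
    exact mul_le_mul_of_nonneg_left (hb s) (by positivity)
  have hcorr : Tendsto (fun s => (κ / l * s⁻¹) • b s) atTop (𝓝 0) := by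
    refine squeeze_zero_norm' ?_
      (by simpa using (tendsto_inv_atTop_zero.const_mul |κ / l|).mul_const B)
    filter_upwards [eventually_gt_atTop 0] with s hs
    rw [norm_smul, Real.norm_eq_abs, abs_mul, abs_inv, abs_of_pos hs]
    exact mul_le_mul_of_nonneg_left (hb s) (by positivity)
  refine ⟨_, ((tendsto_limUnder_of_hasDerivAt_of_integrableOn_Ioi hderiv hint).sub hcorr).congr
    fun s => ?_⟩
  simp

end SerretFrenet

namespace ProfileSystem

variable {c₀ α : ℝ} {m n b : ℝ → Fin 3 → ℝ}

theorem frameMatrix_mem_orthogonalGroup (h : ProfileSystem c₀ α m n b) (s : ℝ) :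
    frameMatrix m n b s ∈ orthogonalGroup (Fin 3) ℝ :=
  h.1.frameMatrix_mem_orthogonalGroup (frameMatrix_eq_one h.2.1 h.2.2.1 h.2.2.2) s

theorem apply_neg (h : ProfileSystem c₀ α m n b) (s : ℝ) : m (-s) = ![1, -1, -1] * m s :=
  h.1.apply_neg (fun s => by simp) (fun s => by ring) h.2.1 h.2.2.1 h.2.2.2 s

theorem exists_tendsto_atTop (hα : 0 ≤ α) (h : ProfileSystem c₀ α m n b) :
    ∃ A, Tendsto m atTop (𝓝 A) := by
  have hrow (s : ℝ) (k : Fin 3) : ‖frameMatrix m n b s k‖ ≤ 1 :=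
    norm_le_one_of_dotProduct_self_eq_one
      (dotProduct_self_eq_one_of_mem_orthogonalGroup (h.frameMatrix_mem_orthogonalGroup s) k)
  have hSF := h.1
  rcases hα.eq_or_lt with rfl | hα
  · have hc : (fun s : ℝ => c₀ * exp (-0 * s ^ 2 / 4)) = fun _ => c₀ := by
      funext s; simp
    have hτ : (fun s : ℝ => √(1 - 0 ^ 2) * s / 2) = fun s => 2⁻¹ * s := by
      funext s; simp; ring
    rw [hc, hτ] at hSF
    exact hSF.exists_tendsto_atTop_of_linear_torsion (by norm_num) fun s => hrow s 2
  · have hc : Integrable fun s : ℝ => c₀ * exp (-α * s ^ 2 / 4) := by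
      refine ((integrable_exp_neg_mul_sq (by positivity : 0 < α / 4)).const_mul c₀).congr ?_
      exact Eventually.of_forall fun s => by ring_nf
    exact hSF.exists_tendsto_atTop_of_integrableOn (a := 0) hc.integrableOn fun s => hrow s 1

end ProfileSystem

theorem profile_limits_general (c₀ α : ℝ)
    (hα : α ∈ Set.Icc (0 : ℝ) 1)
    (m n b : ℝ → Fin 3 → ℝ) (h : ProfileSystem c₀ α m n b) :
    ∃ A : Fin 3 → ℝ,
      (A 0) ^ 2 + (A 1) ^ 2 + (A 2) ^ 2 = 1 ∧
      Tendsto m atTop (nhds A) ∧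
      Tendsto m atBot (nhds ![A 0, -A 1, -A 2]) ∧
      (∀ s : ℝ, 0 < s →
        Tendsto (fun t : ℝ => m (s / Real.sqrt t))
          (nhdsWithin 0 (Set.Ioi 0)) (nhds A)) ∧
      (∀ s : ℝ, s < 0 →
        Tendsto (fun t : ℝ => m (s / Real.sqrt t))
          (nhdsWithin 0 (Set.Ioi 0)) (nhds ![A 0, -A 1, -A 2])) := by
  obtain ⟨A, htop⟩ := h.exists_tendsto_atTop hα.1
  have hunit : A ⬝ᵥ A = 1 :=
    (isClosed_eq (continuous_id.dotProduct continuous_id) continuous_const).mem_of_tendsto htop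
      (Eventually.of_forall fun s =>
        dotProduct_self_eq_one_of_mem_orthogonalGroup (h.frameMatrix_mem_orthogonalGroup s) 0)
  have hbot : Tendsto m atBot (𝓝 ![A 0, -A 1, -A 2]) := by
    have hreflect : ![A 0, -A 1, -A 2] = ![1, -1, -1] * A := by
      ext i; fin_cases i <;> simp
    rw [hreflect]
    refine ((htop.const_mul ![1, -1, -1]).comp tendsto_neg_atBot_atTop).congr fun s => ?_
    rw [Function.comp_apply, ← h.apply_neg, neg_neg]
  refine ⟨A, by simpa [dotProduct, Fin.sum_univ_three, sq] using hunit, htop, hbot,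
    fun s hs => htop.comp ?_, fun s hs => hbot.comp ?_⟩
  · simpa only [div_eq_mul_inv] using tendsto_inv_sqrt_nhdsGT_zero.const_mul_atTop hs
  · simpa only [div_eq_mul_inv] using tendsto_inv_sqrt_nhdsGT_zero.const_mul_atTop_of_neg hs

/-- The profile `m` converges to a unit vector `A⁺` as
`s → +∞` and to `A⁻ = (A₁⁺, −A₂⁺, −A₃⁺)` as `s → −∞`; consequently the
self-similar solution `M(s,t) = m(s/√t)` converges pointwise, as `t → 0⁺`,
to `A⁺` for `s > 0` and to `A⁻` for `s < 0`. -/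
theorem profile_limits (c₀ α : ℝ) (hc₀ : 0 < c₀)
    (hα : α ∈ Set.Icc (0 : ℝ) 1)
    (m n b : ℝ → Fin 3 → ℝ) (h : ProfileSystem c₀ α m n b) :
    ∃ A : Fin 3 → ℝ,
      (A 0) ^ 2 + (A 1) ^ 2 + (A 2) ^ 2 = 1 ∧
      Tendsto m atTop (nhds A) ∧
      Tendsto m atBot (nhds ![A 0, -A 1, -A 2]) ∧
      (∀ s : ℝ, 0 < s →
        Tendsto (fun t : ℝ => m (s / Real.sqrt t))
          (nhdsWithin 0 (Set.Ioi 0)) (nhds A)) ∧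
      (∀ s : ℝ, s < 0 →
        Tendsto (fun t : ℝ => m (s / Real.sqrt t))
          (nhdsWithin 0 (Set.Ioi 0)) (nhds ![A 0, -A 1, -A 2])) :=
  profile_limits_general c₀ α hα m n b h
end

section
/- Let c₀>0, α∈(0,1], β=√(1−α²), let m,n,b:ℝ→ℝ³ solve the self-similar profile system, and let A⁺=(A₁⁺,A₂⁺,A₃⁺)∈ℝ³ be the limit of m(s) as s→+∞. Then the following inequalities hold: |A₁⁺ − 1| ≤ (c₀²π/α)·(1 + c₀²π/(8α)); |A₂⁺ − c₀√(π(1+α))/√2| ≤ c₀²π/4 + (c₀²π/(α√2))·(1 + c₀²π/8 + c₀√(π(1+α))/(2√2)) + (c₀²π/(2√2·α))²; and |A₃⁺ − c₀√(π(1−α))/√2| ≤ c₀²π/4 + (c₀²π/(α√2))·(1 + c₀²π/8 + c₀√(π(1−α))/(2√2)) + (c₀²π/(2√2·α))². -/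
/-!
Fix a component `i`. The Serret–Frenet matrix is skew-symmetric, so `m_i² + n_i² + b_i²` is
conserved; with the initial frame it equals `1`, whence `|m_i| ≤ 1`. Let `θ(s) = βs²/4`, a
primitive of the torsion. Then `ψ = (n_i + i b_i) e^{iθ}` satisfies `ψ' = -c m_i e^{iθ}`, so
`|ψ(s) - ψ(0)| ≤ C(s) := ∫₀ˢ c`, while `m_i' = c n_i = Re (c e^{-iθ} ψ)`. Replacing `ψ` by `ψ(0)`
in the integral of `m_i'` costs at most `∫₀^∞ c C = C(∞)² / 2 = c₀²π/(2α)`, and what is left is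
`Re ((n_i + i b_i)(0) ∫₀^∞ c₀ e^{-(α + iβ)s²/4} ds)`, a complex Gaussian integral equal to
`c₀ (√(π(1+α)/2) - i √(π(1-α)/2))`. So each `A_i` lies within `c₀²π/(2α)` of the predicted value,
and `c₀²π/(2α)` is below each of the stated bounds.
-/

open Real Filter

open MeasureTheory Set

theorem norm_sub_le_integral_of_norm_deriv_le {E : Type*} [NormedAddCommGroup E]
    [NormedSpace ℝ E] {f f' : ℝ → E} {k : ℝ → ℝ} (hk : Continuous k)
    (hf : ∀ s, HasDerivAt f (f' s) s) (hf'k : ∀ s, ‖f' s‖ ≤ k s) {a s : ℝ} (hs : a ≤ s) :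
    ‖f s - f a‖ ≤ ∫ t in a..s, k t := by
  refine image_norm_le_of_norm_deriv_right_le_deriv_boundary (f := fun s => f s - f a)
    (B := fun s => ∫ t in a..s, k t) ?_ (fun x _ => ((hf x).sub_const (f a)).hasDerivWithinAt)
    (by simp) (fun x => (hk.integral_hasStrictDerivAt a x).hasDerivAt) (fun x _ => hf'k x)
    ⟨hs, le_rfl⟩
  exact fun x _ => ((hf x).continuousAt.sub continuousAt_const).continuousWithinAt

theorem integral_mul_integral_eq_sq_div_two {k : ℝ → ℝ} (hk : Continuous k) (a b : ℝ) :
    ∫ s in a..b, k s * ∫ t in a..s, k t = (∫ s in a..b, k s) ^ 2 / 2 := by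
  have hd : ∀ s, HasDerivAt (fun s => (∫ t in a..s, k t) ^ 2 / 2) (k s * ∫ t in a..s, k t) s :=
    fun s => ((((hk.integral_hasStrictDerivAt a s).hasDerivAt).pow 2).div_const 2).congr_deriv
      (by ring)
  have hK : Continuous fun s => ∫ t in a..s, k t :=
    intervalIntegral.continuous_primitive (fun _ _ => hk.intervalIntegrable _ _) a
  rw [intervalIntegral.integral_eq_sub_of_hasDerivAt (fun s _ => hd s)
    ((hk.mul hK).intervalIntegrable _ _)]
  simp

theorem norm_integral_mul_sub_le {g ψ ψ' : ℝ → ℂ} {k : ℝ → ℝ} (hk : Continuous k)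
    (hg : Continuous g) (hgk : ∀ s, ‖g s‖ ≤ k s) (hψ : ∀ s, HasDerivAt ψ (ψ' s) s)
    (hψ'k : ∀ s, ‖ψ' s‖ ≤ k s) {a b : ℝ} (hab : a ≤ b) :
    ‖(∫ s in a..b, g s * ψ s) - (∫ s in a..b, g s) * ψ a‖ ≤ (∫ s in a..b, k s) ^ 2 / 2 := by
  have hψc : Continuous ψ := continuous_iff_continuousAt.2 fun s => (hψ s).continuousAt
  have hK : Continuous fun s => ∫ t in a..s, k t :=
    intervalIntegral.continuous_primitive (fun _ _ => hk.intervalIntegrable _ _) a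
  calc ‖(∫ s in a..b, g s * ψ s) - (∫ s in a..b, g s) * ψ a‖
      = ‖∫ s in a..b, g s * (ψ s - ψ a)‖ := by
        simp only [mul_sub]
        rw [intervalIntegral.integral_sub (f := fun s => g s * ψ s) (g := fun s => g s * ψ a)
          ((hg.mul hψc).intervalIntegrable _ _)
          ((hg.mul continuous_const).intervalIntegrable _ _), intervalIntegral.integral_mul_const]
    _ ≤ ∫ s in a..b, k s * ∫ t in a..s, k t := by
        refine intervalIntegral.norm_integral_le_of_norm_le hab (ae_of_all _ fun s hs => ?_)
          ((hk.mul hK).intervalIntegrable _ _)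
        rw [norm_mul]
        exact mul_le_mul (hgk s) (norm_sub_le_integral_of_norm_deriv_le hk hψ hψ'k hs.1.le)
          (norm_nonneg _) ((norm_nonneg _).trans (hgk s))
    _ = (∫ s in a..b, k s) ^ 2 / 2 := integral_mul_integral_eq_sq_div_two hk a b

namespace SerretFrenet

variable {c τ : ℝ → ℝ} {m n b : ℝ → Fin 3 → ℝ}

theorem hasDerivAt_m_apply (h : SerretFrenet c τ m n b) (i : Fin 3) (s : ℝ) :
    HasDerivAt (fun s => m s i) (c s * n s i) s := by
  simpa using hasDerivAt_pi.1 (h s).1 i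

theorem hasDerivAt_n_apply (h : SerretFrenet c τ m n b) (i : Fin 3) (s : ℝ) :
    HasDerivAt (fun s => n s i) (-c s * m s i + τ s * b s i) s := by
  simpa using hasDerivAt_pi.1 (h s).2.1 i

theorem hasDerivAt_b_apply (h : SerretFrenet c τ m n b) (i : Fin 3) (s : ℝ) :
    HasDerivAt (fun s => b s i) (-τ s * n s i) s := by
  simpa using hasDerivAt_pi.1 (h s).2.2 i

theorem continuous_n_apply (h : SerretFrenet c τ m n b) (i : Fin 3) : Continuous fun s => n s i :=
  continuous_iff_continuousAt.2 fun s => (h.hasDerivAt_n_apply i s).continuousAt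

theorem continuous_b_apply (h : SerretFrenet c τ m n b) (i : Fin 3) : Continuous fun s => b s i :=
  continuous_iff_continuousAt.2 fun s => (h.hasDerivAt_b_apply i s).continuousAt

theorem sq_add_sq_add_sq_apply_eq (h : SerretFrenet c τ m n b) (i : Fin 3) (s t : ℝ) :
    m s i ^ 2 + n s i ^ 2 + b s i ^ 2 = m t i ^ 2 + n t i ^ 2 + b t i ^ 2 := by
  have hd : ∀ s, HasDerivAt (fun s => m s i ^ 2 + n s i ^ 2 + b s i ^ 2) 0 s := fun s =>
    ((((h.hasDerivAt_m_apply i s).fun_pow 2).fun_add ((h.hasDerivAt_n_apply i s).fun_pow 2)).fun_add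
      ((h.hasDerivAt_b_apply i s).fun_pow 2)).congr_deriv (by ring)
  exact is_const_of_deriv_eq_zero (fun s => (hd s).differentiableAt) (fun s => (hd s).deriv) s t

theorem abs_m_apply_le_one (h : SerretFrenet c τ m n b) {i : Fin 3}
    (hi : m 0 i ^ 2 + n 0 i ^ 2 + b 0 i ^ 2 = 1) (s : ℝ) : |m s i| ≤ 1 := by
  rw [← sq_le_one_iff_abs_le_one]
  nlinarith [h.sq_add_sq_add_sq_apply_eq i s 0, sq_nonneg (n s i), sq_nonneg (b s i)]

-- With `θ' = τ`, the phase `e^{iθ}` absorbs the torsion: `(n + ib)' = -c m - iτ (n + ib)`.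
open Complex in
theorem hasDerivAt_twist (h : SerretFrenet c τ m n b) {θ : ℝ → ℝ}
    (hθ : ∀ s, HasDerivAt θ (τ s) s) (i : Fin 3) (s : ℝ) :
    HasDerivAt (fun s => (n s i + b s i * I) * cexp (θ s * I))
      (-(c s * m s i) * cexp (θ s * I)) s := by
  have hn := (h.hasDerivAt_n_apply i s).ofReal_comp
  have hb := ((h.hasDerivAt_b_apply i s).ofReal_comp).mul_const I
  have he := (((hθ s).ofReal_comp).mul_const I).cexp
  refine ((hn.fun_add hb).fun_mul he).congr_deriv ?_
  push_cast
  linear_combination τ s * b s i * cexp (θ s * I) * Complex.I_sq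

variable {θ : ℝ → ℝ}

open Complex in
theorem m_apply_sub_eq_re_integral (h : SerretFrenet c τ m n b) (hc : Continuous c)
    (i : Fin 3) (S : ℝ) :
    m S i - m 0 i =
      (∫ s in 0..S, c s * cexp (-(θ s * I)) * ((n s i + b s i * I) * cexp (θ s * I))).re := by
  have hphase : ∀ s, (c s : ℂ) * cexp (-(θ s * I)) * ((n s i + b s i * I) * cexp (θ s * I)) =
      c s * (n s i + b s i * I) := fun s => by
    have : cexp (-(θ s * I)) * cexp (θ s * I) = 1 := by rw [← Complex.exp_add]; simp
    linear_combination (c s * (n s i + b s i * I)) * this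
  have hcont : Continuous fun s => (c s : ℂ) * (n s i + b s i * I) := by
    have := h.continuous_n_apply i
    have := h.continuous_b_apply i
    fun_prop
  simp only [hphase]
  rw [← RCLike.re_to_complex, ← intervalIntegral.intervalIntegral_re (hcont.intervalIntegrable _ _),
    ← intervalIntegral.integral_eq_sub_of_hasDerivAt (fun s _ => h.hasDerivAt_m_apply i s)
      ((hc.mul (h.continuous_n_apply i)).intervalIntegrable _ _)]
  simp

open Complex in
theorem abs_m_apply_sub_le (h : SerretFrenet c τ m n b) (hc : Continuous c) (hc0 : ∀ s, 0 ≤ c s)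
    (hθ : ∀ s, HasDerivAt θ (τ s) s) (hθ0 : θ 0 = 0) {i : Fin 3}
    (hi : m 0 i ^ 2 + n 0 i ^ 2 + b 0 i ^ 2 = 1) {S : ℝ} (hS : 0 ≤ S) :
    |m S i - m 0 i - ((n 0 i + b 0 i * I) * ∫ s in 0..S, c s * cexp (-(θ s * I))).re| ≤
      (∫ s in 0..S, c s) ^ 2 / 2 := by
  have hθc : Continuous θ := continuous_iff_continuousAt.2 fun s => (hθ s).continuousAt
  have hg : ∀ s, ‖(c s : ℂ) * cexp (-(θ s * I))‖ ≤ c s := fun s => by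
    simp [norm_exp, abs_of_nonneg (hc0 s)]
  have hψ' : ∀ s, ‖-((c s : ℂ) * m s i) * cexp (θ s * I)‖ ≤ c s := fun s => by
    simp only [norm_mul, norm_neg, norm_exp_ofReal_mul_I, mul_one, norm_real, Real.norm_eq_abs,
      abs_of_nonneg (hc0 s)]
    exact mul_le_of_le_one_right (hc0 s) (h.abs_m_apply_le_one hi s)
  have hψ0 : (n 0 i + b 0 i * I : ℂ) = (n 0 i + b 0 i * I) * cexp (θ 0 * I) := by simp [hθ0]
  rw [h.m_apply_sub_eq_re_integral hc i S, hψ0, mul_comm, ← sub_re]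
  refine (abs_re_le_norm _).trans ?_
  exact norm_integral_mul_sub_le hc (by fun_prop) hg (h.hasDerivAt_twist hθ i) hψ' hS

open Complex in
theorem abs_limit_sub_le (h : SerretFrenet c τ m n b) (hc : Continuous c) (hc0 : ∀ s, 0 ≤ c s)
    (hci : IntegrableOn c (Ioi 0)) (hθ : ∀ s, HasDerivAt θ (τ s) s) (hθ0 : θ 0 = 0) {i : Fin 3}
    (hi : m 0 i ^ 2 + n 0 i ^ 2 + b 0 i ^ 2 = 1) {a : ℝ}
    (ha : Tendsto (fun s => m s i) atTop (nhds a)) :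
    |a - m 0 i - ((n 0 i + b 0 i * I) * ∫ s in Ioi 0, c s * cexp (-(θ s * I))).re| ≤
      (∫ s in Ioi 0, c s) ^ 2 / 2 := by
  have hθc : Continuous θ := continuous_iff_continuousAt.2 fun s => (hθ s).continuousAt
  have hgi : IntegrableOn (fun s => (c s : ℂ) * cexp (-(θ s * I))) (Ioi 0) := by
    refine hci.mono' (by fun_prop : Continuous _).aestronglyMeasurable (ae_of_all _ fun s => ?_)
    simp [norm_exp, abs_of_nonneg (hc0 s)]
  have hlim := (ha.sub_const (m 0 i)).sub <| (continuous_re.tendsto _).comp <|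
    (intervalIntegral_tendsto_integral_Ioi 0 hgi tendsto_id).const_mul (n 0 i + b 0 i * I : ℂ)
  refine le_of_tendsto hlim.abs (eventually_atTop.2 ⟨0, fun S hS => ?_⟩)
  refine (h.abs_m_apply_sub_le hc hc0 hθ hθ0 hi hS).trans ?_
  have hcS : ∫ s in 0..S, c s ≤ ∫ s in Ioi 0, c s := by
    rw [intervalIntegral.integral_of_le hS]
    exact setIntegral_mono_set hci (ae_of_all _ hc0) Ioc_subset_Ioi_self.eventuallyLE
  gcongr
  exact intervalIntegral.integral_nonneg hS fun s _ => hc0 s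

end SerretFrenet

theorem integral_Ioi_exp_neg_mul_sq_div_four (c₀ α : ℝ) :
    ∫ s in Ioi 0, c₀ * rexp (-α * s ^ 2 / 4) = c₀ * √(π / α) := by
  have h4 : ∀ s : ℝ, -α * s ^ 2 / 4 = -(α / 4) * s ^ 2 := fun s => by ring
  simp only [h4]
  rw [integral_const_mul, integral_gaussian_Ioi, div_div_eq_mul_div, mul_comm π 4, mul_div_assoc,
    sqrt_mul zero_le_four]
  norm_num

theorem integrableOn_Ioi_exp_neg_mul_sq_div_four {α : ℝ} (c₀ : ℝ) (hα : 0 < α) :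
    IntegrableOn (fun s => c₀ * rexp (-α * s ^ 2 / 4)) (Ioi 0) := by
  have h4 : ∀ s : ℝ, -α * s ^ 2 / 4 = -(α / 4) * s ^ 2 := fun s => by ring
  simp only [h4]
  exact ((integrable_exp_neg_mul_sq (by positivity)).const_mul c₀).integrableOn

open Complex in
theorem integral_gaussian_complex_Ioi_unit_div_four {α : ℝ} (hα : α ∈ Ioc 0 1) :
    ∫ s : ℝ in Ioi 0, cexp (-((α + √(1 - α ^ 2) * I) / 4) * s ^ 2) =
      ((√(π * (1 + α)) / √2 : ℝ) : ℂ) - ((√(π * (1 - α)) / √2 : ℝ) : ℂ) * I := by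
  set X := √(π * (1 + α)) / √2
  set Y := √(π * (1 - α)) / √2
  set β := √(1 - α ^ 2)
  have hX : X ^ 2 = π * (1 + α) / 2 := by
    rw [div_pow, sq_sqrt (by nlinarith [pi_pos, hα.1]), sq_sqrt zero_le_two]
  have hY : Y ^ 2 = π * (1 - α) / 2 := by
    rw [div_pow, sq_sqrt (by nlinarith [pi_pos, hα.2]), sq_sqrt zero_le_two]
  have hXY : X * Y = π * β / 2 := by
    rw [div_mul_div_comm, mul_self_sqrt zero_le_two, ← sqrt_mul (by nlinarith [pi_pos, hα.1]),
      show π * (1 + α) * (π * (1 - α)) = π ^ 2 * (1 - α ^ 2) by ring, sqrt_mul (sq_nonneg π),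
      sqrt_sq pi_pos.le]
  have hβ : β ^ 2 = 1 - α ^ 2 := sq_sqrt (by nlinarith [hα.1, hα.2])
  have hb : 0 < (((α : ℂ) + β * I) / 4).re := by
    simp only [div_ofNat_re, add_re, ofReal_re, mul_re, I_re, I_im, ofReal_im]
    linarith [hα.1]
  -- `α² + β² = 1`, so `π / ((α + βi) / 4) = 4π (α - βi) = (2 (X - Yi))²`.
  have hsq : (π : ℂ) / ((α + β * I) / 4) = (2 * (X - Y * I)) ^ 2 := by
    rw [div_eq_iff (ne_zero_of_re_pos hb)]
    have hX' : (X : ℂ) ^ 2 = π * (1 + α) / 2 := by exact_mod_cast hX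
    have hY' : (Y : ℂ) ^ 2 = π * (1 - α) / 2 := by exact_mod_cast hY
    have hXY' : (X : ℂ) * Y = π * β / 2 := by exact_mod_cast hXY
    have hβ' : (β : ℂ) ^ 2 = 1 - α ^ 2 := by exact_mod_cast hβ
    linear_combination (-(α + β * I)) * hX' + (2 * (α + β * I) * I) * hXY'
      + (-(α + β * I) * I ^ 2) * hY' + (-π) * hβ'
      + (π * β ^ 2 - α * π * (1 - α) / 2 - β * π * (1 - α) / 2 * I) * I_sq
  have hre : 0 < (2 * (X - Y * I)).re := by
    have : 0 < X := div_pos (sqrt_pos.2 (by nlinarith [pi_pos, hα.1])) (sqrt_pos.2 two_pos)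
    simpa using this
  rw [integral_gaussian_complex_Ioi hb, hsq, one_div, sq_cpow_two_inv hre]
  ring

open Complex in
theorem integral_Ioi_profile_phase (c₀ : ℝ) {α : ℝ} (hα : α ∈ Ioc 0 1) :
    ∫ s in Ioi 0, ((c₀ * rexp (-α * s ^ 2 / 4) : ℝ) : ℂ) *
        cexp (-((√(1 - α ^ 2) * s ^ 2 / 4 : ℝ) * I)) =
      c₀ * (((√(π * (1 + α)) / √2 : ℝ) : ℂ) - ((√(π * (1 - α)) / √2 : ℝ) : ℂ) * I) := by
  have hexp : ∀ s : ℝ, ((c₀ * rexp (-α * s ^ 2 / 4) : ℝ) : ℂ) *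
      cexp (-((√(1 - α ^ 2) * s ^ 2 / 4 : ℝ) * I)) =
      c₀ * cexp (-((α + √(1 - α ^ 2) * I) / 4) * s ^ 2) := fun s => by
    push_cast
    rw [mul_assoc, ← Complex.exp_add]
    ring_nf
  simp only [hexp]
  rw [integral_const_mul, integral_gaussian_complex_Ioi_unit_div_four hα]

theorem div_two_mul_le_div_mul_one_add {x α : ℝ} (hx : 0 ≤ x) (hα : 0 < α) :
    x / (2 * α) ≤ x / α * (1 + x / (8 * α)) := by
  have h1 : x / (2 * α) ≤ x / α := div_le_div_of_nonneg_left hx hα (by linarith)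
  have h2 : 0 ≤ x / α * (x / (8 * α)) := by positivity
  linarith [mul_add (x / α) 1 (x / (8 * α))]

theorem div_two_mul_le_div_sqrt_two_bound {x α t : ℝ} (hx : 0 ≤ x) (hα : 0 < α) (ht : 0 ≤ t) :
    x / (2 * α) ≤ x / 4 + x / (α * √2) * (1 + x / 8 + t) + (x / (2 * √2 * α)) ^ 2 := by
  have hsqrt2 : √2 ≤ 2 := by
    nlinarith [sq_sqrt (zero_le_two : (0 : ℝ) ≤ 2), sqrt_nonneg 2]
  have h1 : x / (2 * α) ≤ x / (α * √2) :=
    div_le_div_of_nonneg_left hx (by positivity) (by nlinarith)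
  have h2 : 0 ≤ x / (α * √2) * (x / 8 + t) := by positivity
  have h3 : 0 ≤ x / 4 := by positivity
  nlinarith [sq_nonneg (x / (2 * √2 * α)), mul_add (x / (α * √2)) 1 (x / 8 + t)]

/-- Estimates for the limit vector `A⁺` of the profile `m`
in terms of `c₀` and `α ∈ (0,1]`. -/
theorem limit_vector_estimates (c₀ α : ℝ) (hc₀ : 0 < c₀)
    (hα : α ∈ Set.Ioc (0 : ℝ) 1)
    (m n b : ℝ → Fin 3 → ℝ) (h : ProfileSystem c₀ α m n b)
    (A : Fin 3 → ℝ) (hA : Tendsto m atTop (nhds A)) :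
    |A 0 - 1| ≤ c₀ ^ 2 * Real.pi / α * (1 + c₀ ^ 2 * Real.pi / (8 * α)) ∧
    |A 1 - c₀ * Real.sqrt (Real.pi * (1 + α)) / Real.sqrt 2|
      ≤ c₀ ^ 2 * Real.pi / 4
        + c₀ ^ 2 * Real.pi / (α * Real.sqrt 2)
          * (1 + c₀ ^ 2 * Real.pi / 8
              + c₀ * Real.sqrt (Real.pi * (1 + α)) / (2 * Real.sqrt 2))
        + (c₀ ^ 2 * Real.pi / (2 * Real.sqrt 2 * α)) ^ 2 ∧
    |A 2 - c₀ * Real.sqrt (Real.pi * (1 - α)) / Real.sqrt 2|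
      ≤ c₀ ^ 2 * Real.pi / 4
        + c₀ ^ 2 * Real.pi / (α * Real.sqrt 2)
          * (1 + c₀ ^ 2 * Real.pi / 8
              + c₀ * Real.sqrt (Real.pi * (1 - α)) / (2 * Real.sqrt 2))
        + (c₀ ^ 2 * Real.pi / (2 * Real.sqrt 2 * α)) ^ 2 := by
  obtain ⟨hSF, hm0, hn0, hb0⟩ := h
  have hθ : ∀ s : ℝ, HasDerivAt (fun s => √(1 - α ^ 2) * s ^ 2 / 4) (√(1 - α ^ 2) * s / 2) s :=
    fun s => (((hasDerivAt_pow 2 s).const_mul _).div_const 4).congr_deriv (by ring)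
  have hE : (c₀ * √(π / α)) ^ 2 / 2 = c₀ ^ 2 * π / (2 * α) := by
    rw [mul_pow, sq_sqrt (div_pos pi_pos hα.1).le]
    ring
  have key : ∀ i, |A i - m 0 i - ((n 0 i + b 0 i * Complex.I) *
      (c₀ * (((√(π * (1 + α)) / √2 : ℝ) : ℂ) - ((√(π * (1 - α)) / √2 : ℝ) : ℂ) * Complex.I))).re| ≤
      c₀ ^ 2 * π / (2 * α) := fun i => by
    have := hSF.abs_limit_sub_le (by fun_prop) (fun s => by positivity)
      (integrableOn_Ioi_exp_neg_mul_sq_div_four c₀ hα.1) hθ (by simp)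
      (by fin_cases i <;> simp [hm0, hn0, hb0]) (((continuous_apply i).tendsto A).comp hA)
    rwa [integral_Ioi_profile_phase c₀ hα, integral_Ioi_exp_neg_mul_sq_div_four, hE] at this
  have hx : 0 ≤ c₀ ^ 2 * π := by positivity
  refine ⟨?_, ?_, ?_⟩
  · simpa [hm0, hn0, hb0] using (key 0).trans (div_two_mul_le_div_mul_one_add hx hα.1)
  · simpa [hm0, hn0, hb0, mul_div_assoc] using (key 1).trans
      (div_two_mul_le_div_sqrt_two_bound (t := c₀ * √(π * (1 + α)) / (2 * √2)) hx hα.1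
        (by positivity))
  · simpa [hm0, hn0, hb0, mul_div_assoc] using (key 2).trans
      (div_two_mul_le_div_sqrt_two_bound (t := c₀ * √(π * (1 - α)) / (2 * √2)) hx hα.1
        (by positivity))
end
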